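/- There is no continuous map L : S² → ℂ such that L(-z) = -L(z) for all z ∈ S² and L(z) ≠ 0 for all z ∈ S². -/

import Mathlib

/-!
Spherical coordinates `(θ, φ) ↦ (sin θ cos φ, sin θ sin φ, cos θ)` map the simply connected
plane onto `S²`, so `L` composed with them has a continuous logarithm `G`. Since the coordinates
send `(π - θ, φ + π)` to the antipode of `(θ, φ)`, oddness of `L` makes
`G (π - θ, φ + π) - G (θ, φ)` a continuous logarithm of `-1`, hence a constant `c ≠ 0`.
Adding its values at `(0, 0)` and `(π, π)` gives `2c = G (0, 2π) - G (0, 0)`, which vanishes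
because `G (0, ·)` is a continuous logarithm of the value of `L` at the north pole.
-/

open Real

namespace Complex

theorem const_of_exp_comp {X : Type*} [TopologicalSpace X] [PreconnectedSpace X] {g : X → ℂ}
    (hg : Continuous g) (he : ∀ x x', exp (g x) = exp (g x')) (x x' : X) : g x = g x' :=
  isCoveringMap_exp.const_of_comp hg (fun x x' ↦ Subtype.ext (he x x')) x x'

theorem exists_continuous_exp_comp_eq {X : Type*} [TopologicalSpace X] [SimplyConnectedSpace X]
    [LocallyPathConnectedSpace X] {g : X → ℂ} (hg : Continuous g) (hg₀ : ∀ x, g x ≠ 0) :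
    ∃ G : X → ℂ, Continuous G ∧ ∀ x, exp (G x) = g x := by
  obtain ⟨x₀⟩ : Nonempty X := inferInstance
  obtain ⟨G, ⟨-, hG⟩, -⟩ :=
    isCoveringMapOn_exp.existsUnique_continuousMap_lifts ⟨g, hg⟩ (exp_log (hg₀ x₀)) hg₀
  exact ⟨G, G.continuous, congrFun hG⟩

end Complex

noncomputable def sphericalPoint (p : ℝ × ℝ) : Metric.sphere (0 : EuclideanSpace ℝ (Fin 3)) 1 :=
  ⟨!₂[sin p.1 * cos p.2, sin p.1 * sin p.2, cos p.1], by
    rw [mem_sphere_zero_iff_norm, EuclideanSpace.norm_eq, Fin.sum_univ_three, sqrt_eq_one]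
    simp only [Matrix.cons_val_zero, Matrix.cons_val_one, Matrix.cons_val_two, Matrix.head_cons,
      Matrix.tail_cons, norm_eq_abs, sq_abs]
    nlinarith [sin_sq_add_cos_sq p.1, sin_sq_add_cos_sq p.2]⟩

theorem continuous_sphericalPoint : Continuous sphericalPoint := by
  unfold sphericalPoint
  fun_prop

theorem sphericalPoint_zero_fst (φ : ℝ) : sphericalPoint (0, φ) = sphericalPoint (0, 0) := by
  simp [sphericalPoint]

theorem sphericalPoint_pi_sub (θ φ : ℝ) :
    sphericalPoint (π - θ, φ + π) = -sphericalPoint (θ, φ) := by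
  ext i
  fin_cases i <;> simp [sphericalPoint, sin_pi_sub, cos_pi_sub, cos_add_pi, sin_add_pi]

/-- There is no continuous map `L : S² → ℂ` that is odd (`L (-z) = -L z`) and
nowhere vanishing (Borsuk–Ulam). -/
theorem no_continuous_odd_nonvanishing_sphere2_to_complex :
    ¬ ∃ L : Metric.sphere (0 : EuclideanSpace ℝ (Fin 3)) 1 → ℂ,
      Continuous L ∧ (∀ z, L (-z) = -L z) ∧ (∀ z, L z ≠ 0) := by
  rintro ⟨L, hLc, hodd, hL₀⟩
  obtain ⟨G, hGc, hG⟩ :=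
    Complex.exists_continuous_exp_comp_eq (hLc.comp continuous_sphericalPoint) fun _ ↦ hL₀ _
  set A : ℝ × ℝ → ℂ := fun p ↦ G (π - p.1, p.2 + π) - G p
  have hA_exp (p : ℝ × ℝ) : Complex.exp (A p) = -1 := by
    simp only [A, Complex.exp_sub, hG, Function.comp_apply, sphericalPoint_pi_sub, hodd]
    exact neg_div_self (hL₀ _)
  have hA_const : A (π, π) = A (0, 0) :=
    Complex.const_of_exp_comp (by fun_prop) (fun _ _ ↦ by rw [hA_exp, hA_exp]) _ _
  have hG_pole : G (0, π + π) = G (0, 0) :=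
    Complex.const_of_exp_comp (hGc.comp (Continuous.prodMk_right 0))
      (fun _ _ ↦ by simp only [Function.comp_apply, hG, sphericalPoint_zero_fst]) _ _
  have hA_sum : A (π, π) + A (0, 0) = G (0, π + π) - G (0, 0) := by
    simp only [A, sub_self, sub_zero, zero_add]
    ring
  have hA_zero : A (0, 0) = 0 := by linear_combination (hA_sum - hA_const + hG_pole) / 2
  have := hA_exp (0, 0)
  rw [hA_zero, Complex.exp_zero] at this
  norm_num at this
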